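/- Let h:ℝ→ℝ be an odd increasing homeomorphism and suppose there exist 1<h₀≤h₁ such that h₀ ≤ h(t)t/H(t) ≤ h₁ for all t>0, where H(t)=∫₀^t h(s)ds. Then for all ρ ∈ [0,1] and t ≥ 0, H(ρt) ≤ ρ^{h₀} H(t), and for all ρ ≥ 1 and t ≥ 0, H(ρt) ≤ ρ^{h₁} H(t). -/

import Mathlib

/-! Since `h(0) = 0` and `h` is increasing, `H > 0` on `(0, ∞)`. Writing `p(s) = s h(s) / H(s)`,
one has `d/ds (H(s) / s^c) = (p(s) - c) H(s) / s^(c+1)`, so `H(s) / s^h₀` is nondecreasing and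
`H(s) / s^h₁` is nonincreasing on `(0, ∞)`. Comparing the values at `ρt` and `t` gives the two
scaling inequalities. -/

open Set Real

section ScaledByPower

variable {H h : ℝ → ℝ} {c : ℝ}

lemma hasDerivAt_div_rpow {a s : ℝ} (hd : HasDerivAt H a s) (hs : 0 < s) :
    HasDerivAt (fun x => H x / x ^ c) ((a * s - c * H s) / (s * s ^ c)) s := by
  have hsc : 0 < s ^ c := rpow_pos_of_pos hs c
  refine (hd.div (hasDerivAt_rpow_const (p := c) (Or.inl hs.ne')) hsc.ne').congr_deriv ?_
  rw [rpow_sub_one hs.ne']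
  field_simp

lemma monotoneOn_div_rpow (hd : ∀ s > 0, HasDerivAt H (h s) s)
    (hc : ∀ s > 0, c * H s ≤ h s * s) :
    MonotoneOn (fun s => H s / s ^ c) (Ioi 0) := by
  have hder (s : ℝ) (hs : s ∈ Ioi 0) := hasDerivAt_div_rpow (c := c) (hd s hs) hs
  refine monotoneOn_of_deriv_nonneg (convex_Ioi 0)
    (fun s hs => (hder s hs).continuousAt.continuousWithinAt)
    (fun s hs => (hder s (interior_subset hs)).differentiableAt.differentiableWithinAt)
    fun s hs => ?_
  rw [interior_Ioi] at hs
  rw [(hder s hs).deriv]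
  have hs : 0 < s := hs
  exact div_nonneg (sub_nonneg.2 (hc s hs)) (by positivity)

lemma antitoneOn_div_rpow (hd : ∀ s > 0, HasDerivAt H (h s) s)
    (hc : ∀ s > 0, h s * s ≤ c * H s) :
    AntitoneOn (fun s => H s / s ^ c) (Ioi 0) := by
  have hder (s : ℝ) (hs : s ∈ Ioi 0) := hasDerivAt_div_rpow (c := c) (hd s hs) hs
  refine antitoneOn_of_deriv_nonpos (convex_Ioi 0)
    (fun s hs => (hder s hs).continuousAt.continuousWithinAt)
    (fun s hs => (hder s (interior_subset hs)).differentiableAt.differentiableWithinAt)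
    fun s hs => ?_
  rw [interior_Ioi] at hs
  rw [(hder s hs).deriv]
  have hs : 0 < s := hs
  exact div_nonpos_of_nonpos_of_nonneg (sub_nonpos.2 (hc s hs)) (by positivity)

lemma le_rpow_mul_of_div_rpow_le {ρ t : ℝ} (hρ : 0 < ρ) (ht : 0 < t)
    (hle : H (ρ * t) / (ρ * t) ^ c ≤ H t / t ^ c) :
    H (ρ * t) ≤ ρ ^ c * H t := by
  rw [mul_rpow hρ.le ht.le, div_le_iff₀ (by positivity)] at hle
  calc H (ρ * t) ≤ H t / t ^ c * (ρ ^ c * t ^ c) := hle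
    _ = ρ ^ c * H t := by field_simp

lemma MonotoneOn.le_rpow_mul (hm : MonotoneOn (fun s => H s / s ^ c) (Ioi 0)) {ρ t : ℝ}
    (hρ : 0 < ρ) (hρ1 : ρ ≤ 1) (ht : 0 < t) : H (ρ * t) ≤ ρ ^ c * H t :=
  le_rpow_mul_of_div_rpow_le hρ ht <|
    hm (mul_pos hρ ht) ht (mul_le_of_le_one_left ht.le hρ1)

lemma AntitoneOn.le_rpow_mul (ha : AntitoneOn (fun s => H s / s ^ c) (Ioi 0)) {ρ t : ℝ}
    (hρ : 1 ≤ ρ) (ht : 0 < t) : H (ρ * t) ≤ ρ ^ c * H t :=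
  le_rpow_mul_of_div_rpow_le (one_pos.trans_le hρ) ht <|
    ha ht (mul_pos (one_pos.trans_le hρ) ht) (le_mul_of_one_le_left ht.le hρ)

end ScaledByPower

theorem stmt7_general (h H : ℝ → ℝ) (h₀ h₁ : ℝ)
    (hodd : ∀ t, h (-t) = -h t)
    (hmono : StrictMono h)
    (hcont : Continuous h)
    (hH : ∀ t : ℝ, H t = ∫ s in (0:ℝ)..t, h s)
    (hel : ∀ t > 0, h₀ ≤ h t * t / H t ∧ h t * t / H t ≤ h₁) :
    (∀ ρ ∈ Icc (0:ℝ) 1, ∀ t ≥ (0:ℝ), H (ρ * t) ≤ ρ ^ h₀ * H t) ∧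
      ∀ ρ ≥ (1:ℝ), ∀ t ≥ (0:ℝ), H (ρ * t) ≤ ρ ^ h₁ * H t := by
  have hd (s : ℝ) (_ : s > 0) : HasDerivAt H (h s) s := by
    rw [funext hH]
    exact (hcont.integral_hasStrictDerivAt 0 s).hasDerivAt
  have hH0 : H 0 = 0 := by simp [hH]
  have hh0 : h 0 = 0 := by linarith [neg_zero (G := ℝ) ▸ hodd 0]
  have hpos (s : ℝ) (hs : s > 0) : 0 < H s := by
    rw [hH]
    exact intervalIntegral.intervalIntegral_pos_of_pos_on (hcont.intervalIntegrable 0 s)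
      (fun x hx => hh0 ▸ hmono hx.1) hs
  have hlow (s : ℝ) (hs : s > 0) : h₀ * H s ≤ h s * s :=
    (le_div_iff₀ (hpos s hs)).1 (hel s hs).1
  have hup (s : ℝ) (hs : s > 0) : h s * s ≤ h₁ * H s :=
    (div_le_iff₀ (hpos s hs)).1 (hel s hs).2
  refine ⟨fun ρ ⟨hρ0, hρ1⟩ t ht => ?_, fun ρ hρ t ht => ?_⟩
  · rcases ht.eq_or_lt with rfl | ht
    · simp [hH0]
    rcases hρ0.eq_or_lt with rfl | hρ0
    · rw [zero_mul, hH0]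
      exact mul_nonneg (rpow_nonneg le_rfl _) (hpos t ht).le
    exact (monotoneOn_div_rpow hd hlow).le_rpow_mul hρ0 hρ1 ht
  · rcases ht.eq_or_lt with rfl | ht
    · simp [hH0]
    exact (antitoneOn_div_rpow hd hup).le_rpow_mul hρ ht

theorem stmt7 (h H : ℝ → ℝ) (h₀ h₁ : ℝ)
    (hodd : ∀ t, h (-t) = -h t)
    (hmono : StrictMono h)
    (hcont : Continuous h)
    (hsurj : Function.Surjective h)
    (hH : ∀ t : ℝ, H t = ∫ s in (0:ℝ)..t, h s)
    (hh0 : 1 < h₀) (hh01 : h₀ ≤ h₁)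
    (hel : ∀ t > 0, h₀ ≤ h t * t / H t ∧ h t * t / H t ≤ h₁) :
    (∀ ρ ∈ Icc (0:ℝ) 1, ∀ t ≥ (0:ℝ), H (ρ * t) ≤ ρ ^ h₀ * H t) ∧
      ∀ ρ ≥ (1:ℝ), ∀ t ≥ (0:ℝ), H (ρ * t) ≤ ρ ^ h₁ * H t :=
  stmt7_general h H h₀ h₁ hodd hmono hcont hH hel
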